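/- Let F : [−1,1] → ℝ be continuous with F(1) ≠ 0. Then the integral I(n) = ∫_{−1}^{1} F(u)/(1 − n u) du, defined for n ∈ (0,1), satisfies I(n) / log(1/(1−n)) → F(1) as n → 1⁻. -/

import Mathlib

/-!
Write `F = F 1 + G` with `G 1 = 0`. The kernel `1 / (1 - n u)` integrates exactly to
`n⁻¹ log ((1 + n) / (1 - n)) ∼ log (1 / (1 - n))`. Continuity of `G` at `1` and boundedness
give `|G u| ≤ ε + C (1 - u)`, and `(1 - u) / (1 - n u) ≤ 2`, so the remainder is at most
`ε ∫ 1 / (1 - n u) + 4 C = o (log (1 / (1 - n)))`.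
-/

open Set Filter Topology Asymptotics intervalIntegral Real
open MeasureTheory (volume)

lemma exists_abs_le_add_mul_sub_of_continuousOn {G : ℝ → ℝ} {a b ε : ℝ}
    (hG : ContinuousOn G (Icc a b)) (hGb : G b = 0) (hε : 0 < ε) :
    ∃ C, 0 ≤ C ∧ ∀ u ∈ Icc a b, |G u| ≤ ε + C * (b - u) := by
  rcases lt_or_ge b a with hba | hab
  · exact ⟨0, le_rfl, fun u hu => absurd (hu.1.trans hu.2) (not_le.2 hba)⟩
  obtain ⟨δ, hδ, hnear⟩ := Metric.continuousWithinAt_iff.1 (hG b ⟨hab, le_rfl⟩) ε hε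
  obtain ⟨M, hM⟩ := isCompact_Icc.exists_bound_of_continuousOn hG
  refine ⟨max M 0 / δ, by positivity, fun u hu => ?_⟩
  have hC : 0 ≤ max M 0 / δ := by positivity
  rcases lt_or_ge (b - u) δ with hclose | hfar
  · have hdist : dist u b < δ := by
      rw [Real.dist_eq, abs_sub_comm, abs_of_nonneg (sub_nonneg.2 hu.2)]
      exact hclose
    have := hnear hu hdist
    rw [hGb, Real.dist_eq, sub_zero] at this
    nlinarith [hu.2]
  · calc |G u| ≤ max M 0 / δ * δ := by
          rw [div_mul_cancel₀ _ hδ.ne']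
          exact (hM u hu).trans (le_max_left _ _)
      _ ≤ ε + max M 0 / δ * (b - u) := by nlinarith

lemma one_sub_mul_pos {n u : ℝ} (hn : |n| < 1) (hu : u ∈ Icc (-1 : ℝ) 1) : 0 < 1 - n * u := by
  have : |n * u| < 1 := by
    rw [abs_mul]
    exact mul_lt_one_of_nonneg_of_lt_one_left (abs_nonneg _) hn (abs_le.2 hu)
  linarith [le_abs_self (n * u)]

lemma intervalIntegrable_div_one_sub_mul {f : ℝ → ℝ} (hf : ContinuousOn f (Icc (-1) 1))
    {n : ℝ} (hn : |n| < 1) :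
    IntervalIntegrable (fun u => f u / (1 - n * u)) volume (-1) 1 := by
  refine ContinuousOn.intervalIntegrable ?_
  rw [uIcc_of_le (by norm_num)]
  exact hf.div (by fun_prop) fun u hu => (one_sub_mul_pos hn hu).ne'

lemma integral_one_div_one_sub_mul {n : ℝ} (hn₀ : n ≠ 0) (hn : |n| < 1) :
    ∫ u in (-1 : ℝ)..1, 1 / (1 - n * u) = n⁻¹ * log ((1 + n) / (1 - n)) := by
  obtain ⟨hn₁, hn₂⟩ := abs_lt.1 hn
  rw [integral_comp_sub_mul (fun x => 1 / x) hn₀,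
    integral_one_div_of_pos (by linarith) (by linarith), smul_eq_mul]
  ring_nf

lemma tendsto_log_one_div_one_sub_atTop :
    Tendsto (fun n : ℝ => log (1 / (1 - n))) (𝓝[<] 1) atTop := by
  have h : Tendsto (fun n : ℝ => 1 - n) (𝓝[<] 1) (𝓝[>] 0) := by
    refine tendsto_nhdsWithin_of_tendsto_nhds_of_eventually_within _ ?_ ?_
    · exact tendsto_nhdsWithin_of_tendsto_nhds
        (by simpa using (continuous_sub_left (1 : ℝ)).tendsto 1)
    · filter_upwards [self_mem_nhdsWithin] with n (hn : n < 1)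
      exact sub_pos.2 hn
  simp only [one_div]
  exact tendsto_log_atTop.comp (tendsto_inv_nhdsGT_zero.comp h)

lemma tendsto_integral_one_div_one_sub_mul_div_log :
    Tendsto (fun n : ℝ => (∫ u in (-1 : ℝ)..1, 1 / (1 - n * u)) / log (1 / (1 - n)))
      (𝓝[<] 1) (𝓝 1) := by
  have hL := tendsto_log_one_div_one_sub_atTop
  have hlim : Tendsto (fun n : ℝ => n⁻¹ * (log (1 + n) / log (1 / (1 - n)) + 1)) (𝓝[<] 1)
      (𝓝 (1⁻¹ * (0 + 1))) := by
    refine Tendsto.mul ?_ ((Tendsto.div_atTop (a := log (1 + 1)) ?_ hL).add tendsto_const_nhds)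
    · exact tendsto_nhdsWithin_of_tendsto_nhds (tendsto_inv₀ one_ne_zero)
    · exact tendsto_nhdsWithin_of_tendsto_nhds
        ((continuousAt_const.add continuousAt_id).log (by norm_num)).tendsto
  rw [inv_one, zero_add, one_mul] at hlim
  refine hlim.congr' ?_
  filter_upwards [hL.eventually_gt_atTop 0, Ioo_mem_nhdsLT (show (0 : ℝ) < 1 by norm_num)]
    with n hLn ⟨hn₀, hn₁⟩
  rw [integral_one_div_one_sub_mul hn₀.ne' (abs_lt.2 ⟨by linarith, hn₁⟩),
    div_eq_mul_one_div (1 + n), log_mul (by linarith) (by simp; linarith)]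
  field_simp

lemma norm_integral_div_one_sub_mul_le {G : ℝ → ℝ} {ε C n : ℝ} (hC : 0 ≤ C)
    (hGC : ∀ u ∈ Icc (-1 : ℝ) 1, |G u| ≤ ε + C * (1 - u))
    (hn₀ : 0 ≤ n) (hn₁ : n < 1) :
    ‖∫ u in (-1 : ℝ)..1, G u / (1 - n * u)‖ ≤
      ε * (∫ u in (-1 : ℝ)..1, 1 / (1 - n * u)) + 4 * C := by
  have hn : |n| < 1 := abs_lt.2 ⟨by linarith, hn₁⟩
  have hK := intervalIntegrable_div_one_sub_mul (f := fun _ => 1) continuousOn_const hn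
  calc ‖∫ u in (-1 : ℝ)..1, G u / (1 - n * u)‖
      ≤ ∫ u in (-1 : ℝ)..1, (ε * (1 / (1 - n * u)) + 2 * C) := by
        refine norm_integral_le_of_norm_le (by norm_num) (Eventually.of_forall fun u hu => ?_)
          ((hK.const_mul ε).add intervalIntegrable_const)
        have hu' : u ∈ Icc (-1 : ℝ) 1 := Ioc_subset_Icc_self hu
        have hpos := one_sub_mul_pos hn hu'
        -- `2 (1 - n u) - (1 - u) = (1 + u) (1 - n) + n (1 - u)`
        have hratio : C * (1 - u) ≤ 2 * C * (1 - n * u) := by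
          nlinarith [mul_nonneg hC (add_nonneg (mul_nonneg (neg_le_iff_add_nonneg'.1 hu'.1)
            (sub_nonneg.2 hn₁.le)) (mul_nonneg hn₀ (sub_nonneg.2 hu'.2)))]
        rw [Real.norm_eq_abs, abs_div, abs_of_pos hpos, div_le_iff₀ hpos]
        calc |G u| ≤ ε + C * (1 - u) := hGC u hu'
          _ ≤ (ε * (1 / (1 - n * u)) + 2 * C) * (1 - n * u) := by
            rw [add_mul, mul_assoc, one_div_mul_cancel hpos.ne', mul_one]; linarith
    _ = ε * (∫ u in (-1 : ℝ)..1, 1 / (1 - n * u)) + 4 * C := by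
        rw [integral_add (hK.const_mul ε) intervalIntegrable_const, integral_const_mul,
          intervalIntegral.integral_const, smul_eq_mul]
        ring

lemma isLittleO_integral_div_one_sub_mul {G : ℝ → ℝ} (hG : ContinuousOn G (Icc (-1) 1))
    (hG₁ : G 1 = 0) :
    (fun n : ℝ => ∫ u in (-1 : ℝ)..1, G u / (1 - n * u)) =o[𝓝[<] 1]
      fun n => log (1 / (1 - n)) := by
  refine isLittleO_iff.2 fun c hc => ?_
  obtain ⟨C, hC, hGC⟩ :=
    exists_abs_le_add_mul_sub_of_continuousOn hG hG₁ (ε := c / 4) (by positivity)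
  have hL := tendsto_log_one_div_one_sub_atTop
  filter_upwards [hL.eventually_gt_atTop 0, hL.eventually_ge_atTop (8 * C / c),
    tendsto_integral_one_div_one_sub_mul_div_log.eventually_lt_const one_lt_two,
    Ioo_mem_nhdsLT (show (0 : ℝ) < 1 by norm_num)] with n hLpos hLbig hK ⟨hn₀, hn₁⟩
  rw [div_lt_iff₀ hLpos] at hK
  rw [div_le_iff₀ hc] at hLbig
  rw [Real.norm_eq_abs (log _), abs_of_pos hLpos]
  calc ‖∫ u in (-1 : ℝ)..1, G u / (1 - n * u)‖
      ≤ c / 4 * (∫ u in (-1 : ℝ)..1, 1 / (1 - n * u)) + 4 * C :=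
        norm_integral_div_one_sub_mul_le hC hGC hn₀.le hn₁
    _ ≤ c * log (1 / (1 - n)) := by
        nlinarith [mul_lt_mul_of_pos_left hK (by positivity : 0 < c / 4)]

open Set Filter in
theorem stmt6_general (F : ℝ → ℝ) (hF : ContinuousOn F (Icc (-1) 1)) :
    Tendsto (fun n : ℝ =>
        (∫ u in (-1 : ℝ)..1, F u / (1 - n * u)) / Real.log (1 / (1 - n)))
      (nhdsWithin 1 (Ioo (0 : ℝ) 1)) (nhds (F 1)) := by
  have hsplit : ∀ n ∈ Ioo (0 : ℝ) 1,
      (∫ u in (-1 : ℝ)..1, F u / (1 - n * u)) / log (1 / (1 - n))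
      = F 1 * ((∫ u in (-1 : ℝ)..1, 1 / (1 - n * u)) / log (1 / (1 - n)))
        + (∫ u in (-1 : ℝ)..1, (F u - F 1) / (1 - n * u)) / log (1 / (1 - n)) := by
    intro n ⟨hn₀, hn₁⟩
    have hn : |n| < 1 := abs_lt.2 ⟨by linarith, hn₁⟩
    have hK := intervalIntegrable_div_one_sub_mul (f := fun _ => 1) continuousOn_const hn
    have hG : IntervalIntegrable (fun u => (F u - F 1) / (1 - n * u)) volume (-1) 1 :=
      intervalIntegrable_div_one_sub_mul (hF.sub continuousOn_const) hn
    rw [← mul_div_assoc, ← add_div, ← integral_const_mul,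
      ← integral_add (hK.const_mul _) hG]
    congr 1
    exact integral_congr fun u _ => by ring
  have hremainder := (isLittleO_integral_div_one_sub_mul (hF.sub continuousOn_const)
    (sub_self _)).tendsto_div_nhds_zero
  have hmain := (tendsto_integral_one_div_one_sub_mul_div_log.const_mul (F 1)).add hremainder
  rw [mul_one, add_zero] at hmain
  exact (hmain.mono_left (nhdsWithin_mono _ Ioo_subset_Iio_self)).congr'
    (eventually_nhdsWithin_of_forall fun n hn => (hsplit n hn).symm)

open Set Filter in
/-- If `F : [−1,1] → ℝ` is continuous with `F 1 ≠ 0`, then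
`I(n) = ∫_{−1}^{1} F(u)/(1 − n u) du` satisfies
`I(n) / log(1/(1−n)) → F 1` as `n → 1⁻` along `n ∈ (0,1)`. -/
theorem stmt6 (F : ℝ → ℝ) (hF : ContinuousOn F (Icc (-1) 1)) (hF1 : F 1 ≠ 0) :
    Tendsto (fun n : ℝ =>
        (∫ u in (-1 : ℝ)..1, F u / (1 - n * u)) / Real.log (1 / (1 - n)))
      (nhdsWithin 1 (Ioo (0 : ℝ) 1)) (nhds (F 1)) :=
  stmt6_general F hF
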